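/- Let f : ℝ² → ℝ be homogeneous (f(λz) = λ f(z) for all λ ∈ ℝ, z ∈ ℝ²) and suppose f(z₁ + p, z₂) = f(z₁, z₂) + f(p, 0) whenever p ≥ 0 and z₂ > 0. Then f(z₁, z₂) = f(1,0)·z₁ + f(0,1)·z₂ for all (z₁, z₂) with z₁·z₂ ≥ 0. -/

import Mathlib

/-! Homogeneity makes `f` linear on each axis. For `a ≥ 0, b > 0`, additivity in the first
coordinate splits `f (a, b) = f (0, b) + f (a, 0)`, which settles the closed first quadrant;
homogeneity with `λ = -1` transfers this to the opposite quadrant. -/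

section Homogeneous

variable {f : ℝ × ℝ → ℝ}

theorem apply_fst_of_homogeneous
    (hhom : ∀ l : ℝ, ∀ z : ℝ × ℝ, f (l * z.1, l * z.2) = l * f z) (a : ℝ) :
    f (a, 0) = f (1, 0) * a := by
  simpa [mul_comm] using hhom a (1, 0)

theorem apply_snd_of_homogeneous
    (hhom : ∀ l : ℝ, ∀ z : ℝ × ℝ, f (l * z.1, l * z.2) = l * f z) (b : ℝ) :
    f (0, b) = f (0, 1) * b := by
  simpa [mul_comm] using hhom b (0, 1)

theorem apply_neg_of_homogeneous
    (hhom : ∀ l : ℝ, ∀ z : ℝ × ℝ, f (l * z.1, l * z.2) = l * f z) (a b : ℝ) :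
    f (-a, -b) = -f (a, b) := by
  simpa using hhom (-1) (a, b)

theorem apply_eq_linear_of_nonneg_of_pos
    (hhom : ∀ l : ℝ, ∀ z : ℝ × ℝ, f (l * z.1, l * z.2) = l * f z)
    (hadd : ∀ p : ℝ, 0 ≤ p → ∀ z₁ z₂ : ℝ, 0 < z₂ →
      f (z₁ + p, z₂) = f (z₁, z₂) + f (p, 0))
    {a b : ℝ} (ha : 0 ≤ a) (hb : 0 < b) :
    f (a, b) = f (1, 0) * a + f (0, 1) * b := by
  have hsplit : f (a, b) = f (0, b) + f (a, 0) := by simpa using hadd a ha 0 b hb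
  rw [hsplit, apply_fst_of_homogeneous hhom, apply_snd_of_homogeneous hhom, add_comm]

end Homogeneous

theorem stmt_6 (f : ℝ × ℝ → ℝ)
    (hhom : ∀ l : ℝ, ∀ z : ℝ × ℝ, f (l * z.1, l * z.2) = l * f z)
    (hadd : ∀ p : ℝ, 0 ≤ p → ∀ z₁ z₂ : ℝ, 0 < z₂ →
      f (z₁ + p, z₂) = f (z₁, z₂) + f (p, 0))
    (z₁ z₂ : ℝ) (hz : z₁ * z₂ ≥ 0) :
    f (z₁, z₂) = f (1, 0) * z₁ + f (0, 1) * z₂ := by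
  rcases lt_trichotomy z₂ 0 with hneg | rfl | hpos
  · have h₁ : z₁ ≤ 0 := nonpos_of_mul_nonneg_left hz hneg
    have hopp := apply_eq_linear_of_nonneg_of_pos hhom hadd (neg_nonneg.2 h₁) (neg_pos.2 hneg)
    rw [apply_neg_of_homogeneous hhom] at hopp
    linarith
  · rw [apply_fst_of_homogeneous hhom, mul_zero, add_zero]
  · exact apply_eq_linear_of_nonneg_of_pos hhom hadd (nonneg_of_mul_nonneg_left hz hpos) hpos
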